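/- One has: (i) range d_0 ⊆ ker d_1; (ii) a function φ ∈ C¹ lies in ker d_1 if and only if φ_0(s_i) = 0 for all 0 ≤ i ≤ n, φ_ℓ(s_i) = φ_ℓ(s_0) for all i and all ℓ ≥ 1, and φ_ℓ(q_i) + φ_ℓ(p_{i+1}) = φ_{ℓ+1}(s_0) for all 0 ≤ i < n and ℓ ≥ 0; (iii) the k-linear map ker d_1 → (ℕ → k) sending φ to the function ℓ ↦ φ_ℓ(q_0) + φ_ℓ(p_1) is surjective with kernel exactly range d_0. Consequently ker d_1 / range d_0 is isomorphic to the space of all functions ℕ → k (this is the computation HH¹(Δ) ≅ k^{ℤ≥0}). -/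

import Mathlib

/-!
The `sP`/`sQ` components of `d_1` force `φ_ℓ(s_i)` to be independent of `i`; the `P`/`Q`
components then say that `φ_0(s_i) = 0` and that every sum `φ_ℓ(q_i) + φ_ℓ(p_{i+1})` equals
`φ_{ℓ+1}(s_0)`, so a cocycle is determined up to the free choice of the `p`-values by the
sequence `ℓ ↦ φ_ℓ(q_0) + φ_ℓ(p_1)`, and every sequence occurs. When that sequence vanishes,
all `s`-values vanish and `φ_ℓ(q_i) = -φ_ℓ(p_{i+1})`, so the partial sums of the `p`-values
give a `ψ` with `d_0 ψ = φ`.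
-/

/-- The index set `S_0 = {e_i : 0 ≤ i ≤ n}`. -/
inductive S0 (n : ℕ) where
  | e (i : Fin (n + 1))

/-- The index set `S_1 = {s_i} ∪ {p_{i+1}} ∪ {q_i}` (here `p i` stands for `p_{i+1}`). -/
inductive S1 (n : ℕ) where
  | s (i : Fin (n + 1))
  | p (i : Fin n)
  | q (i : Fin n)

/-- The index set `S_2`: the ambiguities `P²_{i+1}, Q²_i, sP²_{i+1}, sQ²_i`. -/
inductive S2 (n : ℕ) where
  | P (i : Fin n)
  | Q (i : Fin n)
  | sP (i : Fin n)
  | sQ (i : Fin n)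

/-- `(prev φ) ℓ w = φ_{ℓ−1}(w)` with the convention `φ_{−1} = 0`. -/
def prev {k σ : Type*} [Field k] (φ : ℕ → σ → k) : ℕ → σ → k
  | 0, _ => 0
  | ℓ + 1, w => φ ℓ w

variable (n : ℕ) (k : Type*) [Field k]

/-- The differential `d_0 : C⁰ → C¹`. -/
def d0 (φ : ℕ → S0 n → k) : ℕ → S1 n → k := fun ℓ w =>
  match w with
  | .s _ => 0
  | .p i => φ ℓ (.e i.succ) - φ ℓ (.e i.castSucc)
  | .q i => φ ℓ (.e i.castSucc) - φ ℓ (.e i.succ)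

/-- The differential `d_1 : C¹ → C²`. -/
def d1 (φ : ℕ → S1 n → k) : ℕ → S2 n → k := fun ℓ w =>
  match w with
  | .P i => prev φ ℓ (.p i) + prev φ ℓ (.q i) - φ ℓ (.s i.succ)
  | .Q i => prev φ ℓ (.q i) + prev φ ℓ (.p i) - φ ℓ (.s i.castSucc)
  | .sP i => φ ℓ (.s i.succ) - φ ℓ (.s i.castSucc)
  | .sQ i => φ ℓ (.s i.castSucc) - φ ℓ (.s i.succ)

theorem Fin.apply_eq_apply_zero_of_forall_succ {n : ℕ} {α : Type*} {f : Fin (n + 1) → α}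
    (h : ∀ i : Fin n, f i.succ = f i.castSucc) (j : Fin (n + 1)) : f j = f 0 :=
  Fin.induction (motive := fun j => f j = f 0) rfl (fun i hi => (h i).trans hi) j

section

variable {n k}

theorem d0_q_add_d0_p (ψ : ℕ → S0 n → k) (ℓ : ℕ) (i : Fin n) :
    d0 n k ψ ℓ (.q i) + d0 n k ψ ℓ (.p i) = 0 := by
  simp only [d0]
  ring

theorem d1_d0 (ψ : ℕ → S0 n → k) : d1 n k (d0 n k ψ) = fun _ _ => 0 := by
  funext ℓ w
  cases ℓ <;> cases w <;> simp only [d1, d0, prev] <;> ring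

theorem d1_eq_zero_iff (hn : 0 < n) (φ : ℕ → S1 n → k) :
    (d1 n k φ = fun _ _ => 0) ↔
      ((∀ i : Fin (n + 1), φ 0 (.s i) = 0) ∧
       (∀ (i : Fin (n + 1)) (ℓ : ℕ), φ (ℓ + 1) (.s i) = φ (ℓ + 1) (.s 0)) ∧
       (∀ (i : Fin n) (ℓ : ℕ), φ ℓ (.q i) + φ ℓ (.p i) = φ (ℓ + 1) (.s 0))) := by
  constructor
  · intro h
    have hs : ∀ ℓ (j : Fin (n + 1)), φ ℓ (.s j) = φ ℓ (.s 0) := fun ℓ =>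
      Fin.apply_eq_apply_zero_of_forall_succ fun i =>
        sub_eq_zero.mp (congrFun₂ h ℓ (.sP i))
    have hQ : ∀ ℓ (i : Fin n),
        prev φ ℓ (.q i) + prev φ ℓ (.p i) = φ ℓ (.s i.castSucc) := fun ℓ i =>
      sub_eq_zero.mp (congrFun₂ h ℓ (.Q i))
    refine ⟨fun i => ?_, fun i ℓ => hs (ℓ + 1) i, fun i ℓ => ?_⟩
    · have h00 : φ 0 (.s 0) = 0 := by simpa [prev] using (hQ 0 ⟨0, hn⟩).symm
      rw [hs 0 i, h00]
    · rw [← hs (ℓ + 1) i.castSucc]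
      exact hQ (ℓ + 1) i
  · rintro ⟨hs0, hs, hqp⟩
    funext ℓ w
    rcases ℓ with _ | ℓ <;> rcases w with i | i | i | i <;>
      simp only [d1, prev, hs0, hs, add_zero, sub_self] <;> linear_combination hqp i ℓ

def cocycleOf (g : ℕ → k) : ℕ → S1 n → k
  | 0, .s _ => 0
  | ℓ + 1, .s _ => g ℓ
  | ℓ, .q _ => g ℓ
  | _, .p _ => 0

theorem d1_cocycleOf (g : ℕ → k) : d1 n k (cocycleOf g) = fun _ _ => 0 := by
  funext ℓ w
  rcases ℓ with _ | ℓ <;> rcases w with i | i | i | i <;> simp [d1, prev, cocycleOf]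

theorem cocycleOf_q_add_p (g : ℕ → k) (ℓ : ℕ) (i : Fin n) :
    cocycleOf g ℓ (.q i) + cocycleOf g ℓ (.p i) = g ℓ := by
  simp [cocycleOf]

theorem exists_d0_eq_of_d1_eq_zero (hn : 0 < n) {φ : ℕ → S1 n → k}
    (hφ : d1 n k φ = fun _ _ => 0) (h0 : ∀ ℓ, φ ℓ (.q ⟨0, hn⟩) + φ ℓ (.p ⟨0, hn⟩) = 0) :
    ∃ ψ : ℕ → S0 n → k, d0 n k ψ = φ := by
  obtain ⟨hs0, hs, hqp⟩ := (d1_eq_zero_iff hn φ).mp hφ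
  have hs_zero : ∀ ℓ i, φ ℓ (.s i) = 0 := by
    rintro (_ | ℓ) i
    · exact hs0 i
    · rw [hs i ℓ, ← hqp ⟨0, hn⟩ ℓ, h0 ℓ]
  have hq : ∀ ℓ i, φ ℓ (.q i) = -φ ℓ (.p i) := fun ℓ i => by
    linear_combination hqp i ℓ + hs_zero (ℓ + 1) 0
  refine ⟨fun ℓ ⟨j⟩ => Fin.partialSum (fun i => φ ℓ (.p i)) j, ?_⟩
  funext ℓ w
  rcases w with i | i | i
  · exact (hs_zero ℓ i).symm
  · simp [d0, Fin.partialSum_succ]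
  · simp [d0, Fin.partialSum_succ, hq]

end

/-- (i) `range d_0 ⊆ ker d_1`; (ii) `φ ∈ ker d_1` iff `φ_0(s_i) = 0` for all `i`,
`φ_ℓ(s_i) = φ_ℓ(s_0)` for all `i` and `ℓ ≥ 1`, and `φ_ℓ(q_i) + φ_ℓ(p_{i+1}) = φ_{ℓ+1}(s_0)`
for all `i` and `ℓ ≥ 0`; (iii) the map `ker d_1 → (ℕ → k)`, `φ ↦ (ℓ ↦ φ_ℓ(q_0) + φ_ℓ(p_1))`,
is surjective with kernel exactly `range d_0`.  Consequently
`ker d_1 / range d_0 ≅ (ℕ → k)`, which is the computation `HH¹(Δ) ≅ k^{ℤ≥0}`. -/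
theorem HH1_of_diagonal (hn : 0 < n) :
    (∀ φ : ℕ → S0 n → k, d1 n k (d0 n k φ) = fun _ _ => (0 : k)) ∧
    (∀ φ : ℕ → S1 n → k,
      (d1 n k φ = fun _ _ => (0 : k)) ↔
        ((∀ i : Fin (n + 1), φ 0 (.s i) = 0) ∧
         (∀ (i : Fin (n + 1)) (ℓ : ℕ), φ (ℓ + 1) (.s i) = φ (ℓ + 1) (.s 0)) ∧
         (∀ (i : Fin n) (ℓ : ℕ), φ ℓ (.q i) + φ ℓ (.p i) = φ (ℓ + 1) (.s 0)))) ∧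
    (∀ g : ℕ → k, ∃ φ : ℕ → S1 n → k, d1 n k φ = (fun _ _ => (0 : k)) ∧
       ∀ ℓ : ℕ, φ ℓ (.q ⟨0, hn⟩) + φ ℓ (.p ⟨0, hn⟩) = g ℓ) ∧
    (∀ φ : ℕ → S1 n → k, d1 n k φ = (fun _ _ => (0 : k)) →
       ((∀ ℓ : ℕ, φ ℓ (.q ⟨0, hn⟩) + φ ℓ (.p ⟨0, hn⟩) = 0) ↔
         ∃ ψ : ℕ → S0 n → k, d0 n k ψ = φ)) := by
  refine ⟨d1_d0, d1_eq_zero_iff hn, fun g => ⟨cocycleOf g, d1_cocycleOf g,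
    fun ℓ => cocycleOf_q_add_p g ℓ _⟩, fun φ hφ => ⟨exists_d0_eq_of_d1_eq_zero hn hφ, ?_⟩⟩
  rintro ⟨ψ, rfl⟩ ℓ
  exact d0_q_add_d0_p ψ ℓ _
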